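/- Suppose a = {a_k} is a positive, decreasing, summable sequence such that dim_A D_a = 0, where D_a ∈ 𝒞_a is the decreasing complementary set. Then every E ∈ 𝒞_a satisfies dim_A E = 0. -/

import Mathlib

open scoped BigOperators
open Set

/-- `coverNum r F` is the minimal number of closed balls of radius `r`
needed to cover `F`. -/
noncomputable def coverNum (r : ℝ) (F : Set ℝ) : ℕ :=
  sInf {n : ℕ | ∃ S : Finset ℝ, S.card = n ∧ F ⊆ ⋃ x ∈ S, Metric.closedBall x r}

/-- The Assouad dimension of a set `F ⊆ ℝ`. -/
noncomputable def dimA (F : Set ℝ) : ℝ :=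
  sInf {α : ℝ | ∃ c > (0 : ℝ), ∃ ρ > (0 : ℝ), ∀ x ∈ F, ∀ r R : ℝ,
    0 < r → r < R → R < ρ →
    (coverNum r (Metric.closedBall x R ∩ F) : ℝ) ≤ c * (R / r) ^ α}

/-- The Lower Assouad dimension of a set `F ⊆ ℝ`. -/
noncomputable def dimL (F : Set ℝ) : ℝ :=
  sSup {α : ℝ | ∃ c > (0 : ℝ), ∃ ρ > (0 : ℝ), ∀ x ∈ F, ∀ r R : ℝ,
    0 < r → r < R → R < ρ →
    c * (R / r) ^ α ≤ (coverNum r (Metric.closedBall x R ∩ F) : ℝ)}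

/-- `E` is a complementary set of the (positive, summable) sequence `a`,
i.e. `E ∈ 𝒞_a`:  `E = [0, L] \ ⋃ U n` where the `U n` are disjoint open
intervals in `[0, L]` with `U n` of length `a n`, and `L = ∑ a`. -/
def IsComplementarySet (a : ℕ → ℝ) (E : Set ℝ) : Prop :=
  ∃ U : ℕ → Set ℝ,
    (∀ n, ∃ p q : ℝ, p < q ∧ q - p = a n ∧ U n = Set.Ioo p q) ∧
    (∀ n, U n ⊆ Set.Icc 0 (∑' i, a i)) ∧
    Pairwise (Function.onFun Disjoint U) ∧
    E = Set.Icc 0 (∑' i, a i) \ ⋃ n, U n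

/-- The decreasing complementary set `D_a = {∑_{i ≥ k} a i : k} ∪ {0}`,
obtained by placing the gaps in order from right to left starting at `L`. -/
noncomputable def decSet (a : ℕ → ℝ) : Set ℝ :=
  {0} ∪ {x : ℝ | ∃ k : ℕ, x = ∑' i : ℕ, a (k + i)}

/-- Length of the `j`-th closed interval (0-indexed, `j < 2 ^ k`) at step `k`
of the construction of the Cantor set associated to the gap sequence `a`:
it is the total length of all the gaps to be removed from that interval. -/
noncomputable def cantorLen (a : ℕ → ℝ) (k j : ℕ) : ℝ :=
  ∑' m : ℕ, ∑ i ∈ Finset.range (2 ^ m), a (2 ^ (k + m) - 1 + 2 ^ m * j + i)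

/-- Left endpoint of the `j`-th closed interval (0-indexed, `j < 2 ^ k`) at
step `k` of the construction of the Cantor set associated to `a`:  removing
from each step-`k` interval `I_j^k` the open gap of length `a (2 ^ k - 1 + j)`
produces the two step-`(k+1)` intervals `I_{2j}^{k+1}` and `I_{2j+1}^{k+1}`. -/
noncomputable def cantorLeft (a : ℕ → ℝ) : ℕ → ℕ → ℝ
  | 0, _ => 0
  | k + 1, j =>
    if j % 2 = 0 then cantorLeft a k (j / 2)
    else cantorLeft a k (j / 2) + cantorLen a (k + 1) (j - 1) + a (2 ^ k - 1 + j / 2)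

/-- The Cantor set `C_a` associated to the gap sequence `a`. -/
noncomputable def assocCantor (a : ℕ → ℝ) : Set ℝ :=
  ⋂ k : ℕ, ⋃ j ∈ Finset.range (2 ^ k),
    Set.Icc (cantorLeft a k j) (cantorLeft a k j + cantorLen a k j)

/-- `avgLen a n = s_n^{(a)} = 2 ^ (-n) ∑_{j ≥ 2 ^ n - 1} a j`, the average length of
the step-`n` intervals of `C_a` (with `a` 0-indexed, so this matches
`2^{-n} Σ_{j=2^n}^∞ a_j` for the 1-indexed sequence of the paper). -/
noncomputable def avgLen (a : ℕ → ℝ) (n : ℕ) : ℝ :=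
  (∑' j : ℕ, a (2 ^ n - 1 + j)) / 2 ^ n

/-- The gap sequence of the central Cantor set with ratio sequence `r`
(0-indexed): the gap `a i` has length `r 0 ⋯ r (n-1) * (1 - 2 * r n)` where
`2 ^ n - 1 ≤ i ≤ 2 ^ (n+1) - 2`, i.e. `n = log₂ (i + 1)`.  The central Cantor
set `C{r_j}` itself is `assocCantor (centralGaps r)`. -/
noncomputable def centralGaps (r : ℕ → ℝ) (i : ℕ) : ℝ :=
  (∏ j ∈ Finset.range (Nat.log 2 (i + 1)), r j) * (1 - 2 * r (Nat.log 2 (i + 1)))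

/-- A decreasing sequence `a` is doubling if `a n ≤ τ * a (2 * n)` (1-indexed)
for some constant `τ`; with 0-indexing this reads `a n ≤ τ * a (2 * n + 1)`. -/
def IsDoubling (a : ℕ → ℝ) : Prop :=
  ∃ τ : ℝ, ∀ n : ℕ, a n ≤ τ * a (2 * n + 1)

/-- A general sequence is doubling if its decreasing rearrangement is. -/
def IsDoublingGen (a : ℕ → ℝ) : Prop :=
  ∃ σ : Equiv.Perm ℕ, Antitone (a ∘ σ) ∧ IsDoubling (a ∘ σ)
/-
Cut the window `[x - R, x + R]` into cells of length `2r`. Since `E` is Lebesgue null, a cell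
meeting `E` either contains `0` or `L`, or contains an endpoint of a gap of length `≥ r`, or lies
in `[0, L]` and is filled, up to a null set, by gaps of length `< r`. Both counts are controlled
by `D_a`, where the gaps sit in decreasing order. The `N` long gaps inside `[x - 3R, x + 3R]` have
total length `≤ 6R`, hence so do the `N` shortest long gaps; these are consecutive in `D_a` and
give `N + 1` points of `D_a`, pairwise `r` apart, in a ball of radius `6R`. The short gaps have
total length `G` at most `6R` and at most the sum `T` of all short terms of `a`; the points of
`D_a` in `[0, T]` are `r`-dense, so `D_a` is `r`-dense on an interval of length `G`. Hence every
Assouad exponent of `D_a` is one of `E`.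
-/

open Filter Topology MeasureTheory Metric
open scoped Finset

lemma coverNum_le_card {r : ℝ} {F : Set ℝ} (S : Finset ℝ)
    (h : F ⊆ ⋃ x ∈ S, closedBall x r) : coverNum r F ≤ #S :=
  Nat.sInf_le ⟨S, rfl, h⟩

lemma exists_finset_card_eq_coverNum {r : ℝ} {F : Set ℝ} (hF : Bornology.IsBounded F)
    (hr : 0 < r) : ∃ S : Finset ℝ, #S = coverNum r F ∧ F ⊆ ⋃ x ∈ S, closedBall x r := by
  obtain ⟨t, -, ht, hcov⟩ := hF.isCompact_closure.finite_cover_balls hr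
  refine Nat.sInf_mem (s := {n | ∃ S : Finset ℝ, #S = n ∧ F ⊆ ⋃ x ∈ S, closedBall x r})
    ⟨_, ht.toFinset, rfl, subset_closure.trans (hcov.trans ?_)⟩
  simp only [Set.Finite.mem_toFinset]
  exact iUnion₂_mono fun _ _ => ball_subset_closedBall

lemma card_le_coverNum {ι : Type*} {r : ℝ} {F : Set ℝ} (hF : Bornology.IsBounded F)
    (hr : 0 < r) (s : Finset ι) (y : ι → ℝ) (hyF : ∀ i ∈ s, y i ∈ F)
    (hsep : ∀ i ∈ s, ∀ j ∈ s, i ≠ j → 2 * r < dist (y i) (y j)) : #s ≤ coverNum r F := by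
  obtain ⟨S, hS, hcov⟩ := exists_finset_card_eq_coverNum hF hr
  have hcenter : ∀ i ∈ s, ∃ z ∈ S, dist (y i) z ≤ r := fun i hi => by
    simpa using hcov (hyF i hi)
  choose! z hzS hz using hcenter
  rw [← hS]
  refine Finset.card_le_card_of_injOn z hzS fun i hi j hj hij => ?_
  by_contra hne
  have hzi : dist (y i) (z j) ≤ r := hij ▸ hz i hi
  linarith [hsep i hi j hj hne, dist_triangle_right (y i) (y j) (z j), hz j hj]

lemma sub_le_mul_coverNum {r u v : ℝ} {F : Set ℝ} (hF : Bornology.IsBounded F) (hr : 0 < r)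
    (hdense : ∀ y ∈ Icc u v, ∃ t ∈ F, dist y t ≤ r) : v - u ≤ 4 * r * coverNum r F := by
  obtain ⟨S, hS, hcov⟩ := exists_finset_card_eq_coverNum hF hr
  have hsub : Icc u v ⊆ ⋃ x ∈ S, closedBall x (2 * r) := by
    intro y hy
    obtain ⟨t, htF, hyt⟩ := hdense y hy
    obtain ⟨x, hxS, htx⟩ := mem_iUnion₂.1 (hcov htF)
    exact mem_iUnion₂.2 ⟨x, hxS, (dist_triangle y t x).trans (by linarith [mem_closedBall.1 htx])⟩
  have hvol : volume (Icc u v) ≤ #S * ENNReal.ofReal (2 * (2 * r)) := calc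
    _ ≤ volume (⋃ x ∈ S, closedBall x (2 * r)) := measure_mono hsub
    _ ≤ ∑ x ∈ S, volume (closedBall x (2 * r)) := measure_biUnion_finset_le S _
    _ = #S * ENNReal.ofReal (2 * (2 * r)) := by
      rw [Finset.sum_congr rfl fun x _ => Real.volume_closedBall x (2 * r), Finset.sum_const,
        nsmul_eq_mul]
  rw [Real.volume_Icc, ← ENNReal.ofReal_natCast, ← ENNReal.ofReal_mul (by positivity),
    ENNReal.ofReal_le_ofReal_iff (by positivity)] at hvol
  rw [← hS]
  linarith

def gridCell (u s : ℝ) (i : ℕ) : Set ℝ := Ico (u + i * s) (u + (i + 1) * s)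

section gridCell

variable {u s : ℝ}

lemma mem_gridCell_floor (hs : 0 < s) {y : ℝ} (hy : u ≤ y) :
    y ∈ gridCell u s ⌊(y - u) / s⌋₊ := by
  have h0 : 0 ≤ (y - u) / s := div_nonneg (by linarith) hs.le
  have h1 := Nat.floor_le h0
  have h2 := Nat.lt_floor_add_one ((y - u) / s)
  rw [le_div_iff₀ hs] at h1
  rw [div_lt_iff₀ hs] at h2
  exact ⟨by linarith, by linarith⟩

lemma pairwise_disjoint_gridCell (hs : 0 ≤ s) :
    Pairwise (Function.onFun Disjoint (gridCell u s)) := by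
  intro i j hij
  wlog h : i < j generalizing i j
  · exact (this hij.symm (hij.lt_or_gt.resolve_left h)).symm
  have : ((i : ℝ) + 1) * s ≤ j * s := mul_le_mul_of_nonneg_right (by exact_mod_cast h) hs
  exact Set.disjoint_left.2 fun y hyi hyj => by linarith [hyi.2, hyj.1]

lemma volume_gridCell (i : ℕ) : volume (gridCell u s i) = ENNReal.ofReal s := by
  rw [gridCell, Real.volume_Ico]
  ring_nf

lemma coverNum_le_card_of_gridCell {r : ℝ} (hr : 0 < r) {F : Set ℝ} {n : ℕ}
    (hF : F ⊆ Ico u (u + n * (2 * r))) (S : Finset ℕ)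
    (hS : ∀ i < n, (gridCell u (2 * r) i ∩ F).Nonempty → i ∈ S) : coverNum r F ≤ #S := by
  refine (coverNum_le_card (S.image fun i : ℕ => u + i * (2 * r) + r) fun y hy => ?_).trans
    Finset.card_image_le
  obtain ⟨hyu, hyn⟩ := hF hy
  have hcell := mem_gridCell_floor (by positivity : 0 < 2 * r) hyu
  have hlt : ⌊(y - u) / (2 * r)⌋₊ < n := by
    rw [Nat.floor_lt (div_nonneg (by linarith) (by positivity)), div_lt_iff₀ (by positivity)]
    linarith
  refine mem_iUnion₂.2 ⟨_, Finset.mem_image_of_mem _ (hS _ hlt ⟨y, hcell, hy⟩), ?_⟩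
  obtain ⟨h1, h2⟩ := hcell
  rw [mem_closedBall, Real.dist_eq, abs_le]
  constructor <;> linarith

lemma gridCell_subset_Icc (hs : 0 ≤ s) {i n : ℕ} (hi : i < n) :
    gridCell u s i ⊆ Icc u (u + n * s) := fun y hy => by
  have h1 : 0 ≤ (i : ℝ) * s := by positivity
  have h2 : ((i : ℝ) + 1) * s ≤ n * s := mul_le_mul_of_nonneg_right (by exact_mod_cast hi) hs
  exact ⟨by linarith [hy.1], by linarith [hy.2]⟩

lemma card_mul_le_of_gridCell_subset (hs : 0 ≤ s) {S : Finset ℕ} {E V : Set ℝ}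
    (hE : volume E = 0) (hS : ∀ i ∈ S, gridCell u s i ⊆ E ∪ V) :
    #S * ENNReal.ofReal s ≤ volume V := calc
  #S * ENNReal.ofReal s = volume (⋃ i ∈ S, gridCell u s i) := by
    rw [measure_biUnion_finset (fun i _ j _ hij => pairwise_disjoint_gridCell hs hij)
      fun _ _ => measurableSet_Ico]
    simp [volume_gridCell]
  _ ≤ volume (E ∪ V) := measure_mono (iUnion₂_subset hS)
  _ ≤ volume E + volume V := measure_union_le _ _
  _ = volume V := by rw [hE, zero_add]

end gridCell

lemma closedBall_subset_Ico_floor {x R r : ℝ} (hr : 0 < r) :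
    closedBall x R ⊆ Ico (x - R) (x - R + ((⌊R / r⌋₊ + 1 : ℕ) : ℝ) * (2 * r)) := by
  have h := Nat.lt_floor_add_one (R / r)
  rw [div_lt_iff₀ hr] at h
  rw [Real.closedBall_eq_Icc]
  exact Icc_subset_Ico_right (by push_cast; linarith)

lemma gridCell_subset_Icc_of_lt_floor {x r R : ℝ} (hr : 0 < r) (hrR : r < R) {i : ℕ}
    (hi : i < ⌊R / r⌋₊ + 1) : gridCell (x - R) (2 * r) i ⊆ Icc (x - 3 * R) (x + 3 * R) := by
  have h := Nat.floor_le (div_nonneg (hr.trans hrR).le hr.le : 0 ≤ R / r)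
  rw [le_div_iff₀ hr] at h
  refine (gridCell_subset_Icc (by positivity) hi).trans (Icc_subset_Icc (by linarith) ?_)
  push_cast
  linarith

def AssouadBound (F : Set ℝ) (c ρ α : ℝ) : Prop :=
  ∀ x ∈ F, ∀ r R : ℝ, 0 < r → r < R → R < ρ →
    (coverNum r (closedBall x R ∩ F) : ℝ) ≤ c * (R / r) ^ α

def assouadExponents (F : Set ℝ) : Set ℝ :=
  {α : ℝ | ∃ c > (0 : ℝ), ∃ ρ > (0 : ℝ), AssouadBound F c ρ α}

lemma one_mem_assouadExponents (F : Set ℝ) : 1 ∈ assouadExponents F := by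
  refine ⟨2, two_pos, 1, one_pos, fun x _ r R hr hrR _ => ?_⟩
  have hcov := coverNum_le_card_of_gridCell hr (F := closedBall x R ∩ F)
    (inter_subset_left.trans (closedBall_subset_Ico_floor (x := x) (R := R) hr))
    (Finset.range _) fun i hi _ => Finset.mem_range.2 hi
  have h := Nat.floor_le (div_nonneg (hr.trans hrR).le hr.le : 0 ≤ R / r)
  have h1 : 1 ≤ R / r := (one_le_div hr).2 hrR.le
  rw [Real.rpow_one]
  calc (coverNum r (closedBall x R ∩ F) : ℝ) ≤ ⌊R / r⌋₊ + 1 := by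
        exact_mod_cast hcov.trans (by simp)
    _ ≤ 2 * (R / r) := by linarith

lemma nonneg_of_mem_assouadExponents {F : Set ℝ} (hF : F.Nonempty) {α : ℝ}
    (hα : α ∈ assouadExponents F) : 0 ≤ α := by
  obtain ⟨c, -, ρ, hρ, hbound⟩ := hα
  obtain ⟨x, hx⟩ := hF
  by_contra! hneg
  have hlim : Tendsto (fun t : ℝ => c * t ^ α) atTop (𝓝 0) := by
    simpa using (tendsto_rpow_neg_atTop (neg_pos.2 hneg)).const_mul c
  obtain ⟨t, hct, ht⟩ := ((hlim.eventually_lt_const one_pos).and (eventually_gt_atTop 1)).exists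
  have hR : 0 < ρ / 2 := by positivity
  have hone : 1 ≤ coverNum (ρ / 2 / t) (closedBall x (ρ / 2) ∩ F) := by
    simpa using card_le_coverNum (isBounded_closedBall.subset inter_subset_left)
      (by positivity) {x} id (by simp [hx, hR.le]) (by simp)
  have := hbound x hx (ρ / 2 / t) (ρ / 2) (by positivity) (div_lt_self hR ht) (by linarith)
  rw [div_div_cancel₀ hR.ne'] at this
  linarith [(Nat.one_le_cast.2 hone : (1 : ℝ) ≤ _)]

lemma dimA_nonneg {F : Set ℝ} (hF : F.Nonempty) : 0 ≤ dimA F :=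
  le_csInf ⟨1, one_mem_assouadExponents F⟩ fun _ => nonneg_of_mem_assouadExponents hF

lemma dimA_le_dimA_of_assouadExponents_subset {F G : Set ℝ} (hF : F.Nonempty)
    (h : assouadExponents G ⊆ assouadExponents F) : dimA F ≤ dimA G :=
  le_csInf ⟨1, one_mem_assouadExponents G⟩ fun _ hα =>
    csInf_le ⟨0, fun _ => nonneg_of_mem_assouadExponents hF⟩ (h hα)

lemma Antitone.exists_threshold {a : ℕ → ℝ} (hdec : Antitone a)
    (ha : Tendsto a atTop (𝓝 0)) {r : ℝ} (hr : 0 < r) :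
    ∃ n₀, (∀ j < n₀, r ≤ a j) ∧ ∀ j, n₀ ≤ j → a j < r := by
  classical
  have hex : ∃ n, a n < r := (ha.eventually_lt_const hr).exists
  exact ⟨Nat.find hex, fun j hj => not_lt.1 (Nat.find_min hex hj),
    fun j hj => (hdec hj).trans_lt (Nat.find_spec hex)⟩

lemma Antitone.sum_Ico_sub_card_le_sum {f : ℕ → ℝ} (hf : Antitone f) {n : ℕ} {J : Finset ℕ}
    (hJ : J ⊆ Finset.range n) : ∑ i ∈ Finset.Ico (n - #J) n, f i ≤ ∑ j ∈ J, f j := by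
  classical
  set B := Finset.Ico (n - #J) n
  have hJn : #J ≤ n := by simpa using Finset.card_le_card hJ
  have hcard : #(B \ J) = #(J \ B) := Finset.card_sdiff_comm (by simp [B]; omega)
  have hB : ∑ i ∈ B \ J, f i ≤ #(B \ J) • f (n - #J) :=
    Finset.sum_le_card_nsmul _ _ _ fun i hi => hf (Finset.mem_Ico.1 (Finset.mem_sdiff.1 hi).1).1
  have hJ' : #(J \ B) • f (n - #J) ≤ ∑ j ∈ J \ B, f j := by
    refine Finset.card_nsmul_le_sum _ _ _ fun j hj => hf ?_
    obtain ⟨hjJ, hjB⟩ := Finset.mem_sdiff.1 hj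
    have := Finset.mem_range.1 (hJ hjJ)
    simp only [B, Finset.mem_Ico, not_and, not_lt] at hjB
    omega
  rw [← Finset.sum_inter_add_sum_sdiff B J, ← Finset.sum_inter_add_sum_sdiff J B,
    Finset.inter_comm J B]
  rw [hcard] at hB
  linarith

lemma exists_abs_sub_le_of_tendsto_zero {u : ℕ → ℝ} {r y : ℝ} (hu : Tendsto u atTop (𝓝 0))
    (hstep : ∀ k, u k - u (k + 1) ≤ r) (hr : 0 < r) (hy : y ∈ Icc 0 (u 0)) :
    ∃ k, |y - u k| ≤ r := by
  classical
  have hex : ∃ k, u k < y + r := (hu.eventually_lt_const (by linarith [hy.1])).exists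
  refine ⟨Nat.find hex, abs_le.2 ⟨by linarith [Nat.find_spec hex], ?_⟩⟩
  suffices y ≤ u (Nat.find hex) by linarith
  rcases h : Nat.find hex with _ | k
  · exact hy.2
  · have hk := Nat.find_min hex (m := k) (by omega)
    linarith [not_lt.1 hk, hstep k]

noncomputable def tailSum (a : ℕ → ℝ) (k : ℕ) : ℝ := ∑' i, a (k + i)

section tailSum

variable {a : ℕ → ℝ}

lemma tailSum_mem_decSet (a : ℕ → ℝ) (k : ℕ) : tailSum a k ∈ decSet a := Or.inr ⟨k, rfl⟩

lemma tendsto_tailSum (a : ℕ → ℝ) : Tendsto (tailSum a) atTop (𝓝 0) :=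
  (tendsto_sum_nat_add a).congr fun i => tsum_congr fun k => by rw [add_comm]

lemma tailSum_sub_tailSum (hsum : Summable a) {u v : ℕ} (huv : u ≤ v) :
    tailSum a u - tailSum a v = ∑ i ∈ Finset.Ico u v, a i := by
  have h := (hsum.comp_injective (add_right_injective u)).sum_add_tsum_nat_add (v - u)
  have hv : ∀ i, u + (i + (v - u)) = v + i := fun i => by omega
  simp only [Function.comp_apply, hv] at h
  rw [Finset.sum_Ico_eq_sum_range, tailSum, tailSum, ← h]
  ring

lemma card_add_one_le_coverNum_decSet (hdec : Antitone a) (hsum : Summable a) {r S : ℝ}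
    (hr : 0 < r) {n₀ : ℕ} (hbig : ∀ j < n₀, r ≤ a j) {J : Finset ℕ}
    (hJ : J ⊆ Finset.range n₀) (hJS : ∑ j ∈ J, a j ≤ S) :
    #J + 1 ≤ coverNum (r / 3) (closedBall (tailSum a n₀) S ∩ decSet a) := by
  have hJn : #J ≤ n₀ := by simpa using Finset.card_le_card hJ
  set m := n₀ - #J
  have hnn : ∀ i ∈ Finset.Ico m n₀, 0 ≤ a i :=
    fun i hi => hr.le.trans (hbig i (Finset.mem_Ico.1 hi).2)
  have hsep : ∀ s t, s < t → t ≤ #J →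
      2 * (r / 3) < dist (tailSum a (m + s)) (tailSum a (m + t)) := by
    intro s t hst ht
    have hsub : Finset.Ico (m + s) (m + t) ⊆ Finset.Ico m n₀ :=
      Finset.Ico_subset_Ico (by omega) (by omega)
    have hlast := Finset.single_le_sum (fun i hi => hnn i (hsub hi))
      (Finset.mem_Ico.2 ⟨(by omega : m + s ≤ m + t - 1), (by omega : m + t - 1 < m + t)⟩)
    rw [Real.dist_eq, tailSum_sub_tailSum hsum (by omega)]
    linarith [hbig (m + t - 1) (by omega), le_abs_self (∑ i ∈ Finset.Ico (m + s) (m + t), a i)]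
  have hmem : ∀ t ≤ #J, tailSum a (m + t) ∈ closedBall (tailSum a n₀) S := by
    intro t ht
    have hsub : Finset.Ico (m + t) n₀ ⊆ Finset.Ico m n₀ := Finset.Ico_subset_Ico_left (by omega)
    have h1 := Finset.sum_le_sum_of_subset_of_nonneg hsub fun i hi _ => hnn i hi
    have h2 := Finset.sum_nonneg fun i hi => hnn i (hsub hi)
    have h3 := hdec.sum_Ico_sub_card_le_sum hJ
    rw [mem_closedBall, Real.dist_eq, tailSum_sub_tailSum hsum (show m + t ≤ n₀ by omega),
      abs_of_nonneg h2]
    linarith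
  have := card_le_coverNum (isBounded_closedBall.subset inter_subset_left)
    (by positivity : 0 < r / 3) (Finset.range (#J + 1)) (fun t => tailSum a (m + t))
    (fun t ht => ⟨hmem t (Finset.mem_range_succ_iff.1 ht), tailSum_mem_decSet a _⟩)
    fun s hs t ht hst => ?_
  · simpa using this
  rw [Finset.mem_range_succ_iff] at hs ht
  rcases hst.lt_or_gt with h | h
  · exact hsep s t h ht
  · exact dist_comm (tailSum a (m + t)) _ ▸ hsep t s h hs

lemma le_mul_coverNum_decSet (hsum : Summable a) {r G S : ℝ} (hr : 0 < r) {n₀ : ℕ}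
    (hsmall : ∀ k, n₀ ≤ k → a k ≤ r) (hG : G ≤ tailSum a n₀) (hGS : G + r ≤ S) :
    G ≤ 4 * r * coverNum r (closedBall (tailSum a n₀) S ∩ decSet a) := by
  have := sub_le_mul_coverNum (u := tailSum a n₀ - G) (v := tailSum a n₀)
    (F := closedBall (tailSum a n₀) S ∩ decSet a)
    (isBounded_closedBall.subset inter_subset_left) hr ?_
  · linarith
  intro y hy
  have hu : Tendsto (fun k => tailSum a (n₀ + k)) atTop (𝓝 0) := by
    simpa [add_comm] using (tendsto_add_atTop_iff_nat n₀).2 (tendsto_tailSum a)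
  have hstep : ∀ k, tailSum a (n₀ + k) - tailSum a (n₀ + (k + 1)) ≤ r := fun k => by
    rw [tailSum_sub_tailSum hsum (by omega), ← add_assoc, Nat.Ico_succ_singleton,
      Finset.sum_singleton]
    exact hsmall _ (by omega)
  obtain ⟨k, hk⟩ := exists_abs_sub_le_of_tendsto_zero (y := y) hu hstep hr
    ⟨by linarith [hy.1], by simpa using hy.2⟩
  refine ⟨tailSum a (n₀ + k), ⟨?_, tailSum_mem_decSet a _⟩, by rwa [Real.dist_eq]⟩
  rw [mem_closedBall, Real.dist_eq, abs_le]
  constructor <;> linarith [abs_le.1 hk, hy.1, hy.2]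

end tailSum

lemma card_le_card_of_forall_exists_mem {ι α : Type*} {f : ι → Set α}
    (hf : Pairwise (Function.onFun Disjoint f)) {S : Finset ι} {T : Finset α}
    (hST : ∀ i ∈ S, ∃ t ∈ T, t ∈ f i) : #S ≤ #T := by
  refine Finset.card_le_card_of_forall_subsingleton (fun i t => t ∈ f i) hST
    fun t _ i ⟨_, hi⟩ j ⟨_, hj⟩ => ?_
  by_contra hne
  exact Set.disjoint_left.1 (hf hne) hi hj

lemma Set.OrdConnected.left_mem_or_right_mem_of_mem_Icc {α : Type*} [LinearOrder α]
    {s : Set α} (hs : s.OrdConnected) {x y p q : α} (hx : x ∈ s) (hy : y ∈ s)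
    (hxI : x ∈ Icc p q) (hyI : y ∉ Icc p q) : p ∈ s ∨ q ∈ s := by
  rcases not_and_or.1 hyI with h | h
  · exact Or.inl (hs.out hy hx ⟨(not_le.1 h).le, hxI.1⟩)
  · exact Or.inr (hs.out hx hy ⟨hxI.2, (not_le.1 h).le⟩)

lemma Set.OrdConnected.left_mem_or_right_mem_of_mem_Ioo {α : Type*} [LinearOrder α]
    {s : Set α} (hs : s.OrdConnected) {x y p q : α} (hx : x ∈ s) (hy : y ∈ s)
    (hxI : x ∈ Ioo p q) (hyI : y ∉ Ioo p q) : p ∈ s ∨ q ∈ s := by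
  rcases not_and_or.1 hyI with h | h
  · exact Or.inl (hs.out hy hx ⟨not_lt.1 h, hxI.1.le⟩)
  · exact Or.inr (hs.out hx hy ⟨hxI.2.le, not_lt.1 h⟩)

lemma card_le_two_mul_card_of_forall_exists {ι κ α : Type*} {f : ι → Set α}
    (hf : Pairwise (Function.onFun Disjoint f)) {P Q : κ → α} {S : Finset ι} {K : Finset κ}
    (hS : ∀ i ∈ S, ∃ j ∈ K, P j ∈ f i ∨ Q j ∈ f i) : #S ≤ 2 * #K := by
  classical
  calc #S ≤ #(K.image P ∪ K.image Q) := card_le_card_of_forall_exists_mem hf fun i hi => by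
        obtain ⟨j, hj, h | h⟩ := hS i hi
        exacts [⟨P j, Finset.mem_union_left _ (Finset.mem_image_of_mem P hj), h⟩,
          ⟨Q j, Finset.mem_union_right _ (Finset.mem_image_of_mem Q hj), h⟩]
    _ ≤ #K + #K := (Finset.card_union_le _ _).trans
        (add_le_add Finset.card_image_le Finset.card_image_le)
    _ = 2 * #K := by ring

lemma card_le_card_add_two_of_ordConnected {ι α : Type*} [LinearOrder α] {f : ι → Set α}
    (hf : Pairwise (Function.onFun Disjoint f)) (hconn : ∀ i, (f i).OrdConnected) {p q : α}
    {J K : Finset ι} (hJ : ∀ j ∈ J, (f j ∩ Icc p q).Nonempty)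
    (hK : ∀ j ∈ J, f j ⊆ Icc p q → j ∈ K) : #J ≤ #K + 2 := by
  classical
  have hout : #(J \ K) ≤ #({p, q} : Finset α) :=
    card_le_card_of_forall_exists_mem hf fun j hj => by
      obtain ⟨hjJ, hjK⟩ := Finset.mem_sdiff.1 hj
      obtain ⟨w, hwf, hwI⟩ := hJ j hjJ
      obtain ⟨w', hw'f, hw'I⟩ := not_subset.1 (mt (hK j hjJ) hjK)
      simpa using (hconn j).left_mem_or_right_mem_of_mem_Icc hwf hw'f hwI hw'I
  have := Finset.card_le_card_sdiff_add_card (s := J) (t := K)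
  have := Finset.card_le_two (a := p) (b := q)
  omega

lemma sum_sub_le_of_pairwise_disjoint_Ioo {ι : Type*} {P Q : ι → ℝ} (hPQ : ∀ j, P j ≤ Q j)
    (hdisj : Pairwise (Function.onFun Disjoint fun j => Ioo (P j) (Q j))) {p q : ℝ} (hpq : p ≤ q)
    {J : Finset ι} (hJ : ∀ j ∈ J, Ioo (P j) (Q j) ⊆ Icc p q) : ∑ j ∈ J, (Q j - P j) ≤ q - p := by
  have hvol : ENNReal.ofReal (∑ j ∈ J, (Q j - P j)) ≤ ENNReal.ofReal (q - p) := calc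
    _ = ∑ j ∈ J, volume (Ioo (P j) (Q j)) := by
      rw [ENNReal.ofReal_sum_of_nonneg fun j _ => sub_nonneg.2 (hPQ j)]
      simp [Real.volume_Ioo]
    _ = volume (⋃ j ∈ J, Ioo (P j) (Q j)) :=
      (measure_biUnion_finset (fun i _ j _ hij => hdisj hij) fun _ _ => measurableSet_Ioo).symm
    _ ≤ volume (Icc p q) := measure_mono (iUnion₂_subset hJ)
    _ = _ := Real.volume_Icc
  exact (ENNReal.ofReal_le_ofReal_iff (by linarith)).1 hvol

lemma volume_iUnion_Ioo_le_tailSum {a : ℕ → ℝ} (hsum : Summable a) (hnn : ∀ n, 0 ≤ a n)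
    {P Q : ℕ → ℝ} (hlen : ∀ n, Q n - P n = a n) (n₀ : ℕ) :
    volume (⋃ k, Ioo (P (n₀ + k)) (Q (n₀ + k))) ≤ ENNReal.ofReal (tailSum a n₀) := calc
  _ ≤ ∑' k, volume (Ioo (P (n₀ + k)) (Q (n₀ + k))) := measure_iUnion_le _
  _ = ENNReal.ofReal (tailSum a n₀) := by
    rw [tailSum, ENNReal.ofReal_tsum_of_nonneg (fun k => hnn _)
      (hsum.comp_injective (add_right_injective n₀))]
    simp [Real.volume_Ioo, hlen]

namespace IsComplementarySet

variable {a : ℕ → ℝ} {E : Set ℝ}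

lemma summable (hE : IsComplementarySet a E) : Summable a := by
  by_contra h
  obtain ⟨U, hU, hUsub, -⟩ := hE
  obtain ⟨p, q, hpq, -, hU0⟩ := hU 0
  have := hUsub 0
  rw [hU0, tsum_eq_zero_of_not_summable h, Icc_self] at this
  exact Ioo_infinite hpq ((finite_singleton 0).subset this)

lemma pos (hE : IsComplementarySet a E) (n : ℕ) : 0 < a n := by
  obtain ⟨U, hU, -⟩ := hE
  obtain ⟨p, q, hpq, hlen, -⟩ := hU n
  linarith

lemma zero_mem (hE : IsComplementarySet a E) : (0 : ℝ) ∈ E := by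
  have hL : 0 ≤ ∑' i, a i := tsum_nonneg fun n => (hE.pos n).le
  obtain ⟨U, hU, hUsub, -, rfl⟩ := hE
  refine ⟨left_mem_Icc.2 hL, fun h0 => ?_⟩
  obtain ⟨n, hn⟩ := mem_iUnion.1 h0
  obtain ⟨p, q, -, -, hUn⟩ := hU n
  rw [hUn] at hn
  have := hUsub n (hUn ▸ ⟨by linarith [hn.1], by linarith [hn.1, hn.2]⟩ : p / 2 ∈ U n)
  linarith [this.1, hn.1]

lemma volume_eq_zero (hE : IsComplementarySet a E) : volume E = 0 := by
  have hsum := hE.summable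
  have hpos := hE.pos
  obtain ⟨U, hU, hUsub, hdisj, rfl⟩ := hE
  choose P Q hPQ hlen hUeq using hU
  have hmeas : ∀ n, MeasurableSet (U n) := fun n => hUeq n ▸ measurableSet_Ioo
  have hvolU : volume (⋃ n, U n) = ENNReal.ofReal (∑' i, a i) := by
    rw [measure_iUnion hdisj hmeas, ENNReal.ofReal_tsum_of_nonneg (fun n => (hpos n).le) hsum]
    simp [hUeq, Real.volume_Ioo, hlen]
  rw [measure_sdiff (iUnion_subset hUsub) (MeasurableSet.iUnion hmeas).nullMeasurableSet
    (by simp [hvolU]), hvolU, Real.volume_Icc, sub_zero, tsub_self]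

end IsComplementarySet

lemma Set.OrdConnected.endpoint_mem_or_subset_of_inter_nonempty {I : Set ℝ} (hI : I.OrdConnected)
    {L : ℝ} {P Q : ℕ → ℝ} (hIE : (I ∩ (Icc 0 L \ ⋃ j, Ioo (P j) (Q j))).Nonempty) (n₀ : ℕ) :
    (0 ∈ I ∨ L ∈ I) ∨ (∃ j < n₀, (Ioo (P j) (Q j) ∩ I).Nonempty ∧ (P j ∈ I ∨ Q j ∈ I)) ∨
      (I ⊆ Icc 0 L ∧ ∀ j < n₀, Disjoint I (Ioo (P j) (Q j))) := by
  obtain ⟨e, heI, heL, heU⟩ := hIE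
  by_cases hIL : I ⊆ Icc 0 L
  · by_cases hgap : ∃ j < n₀, ¬ Disjoint I (Ioo (P j) (Q j))
    · obtain ⟨j, hj, hdis⟩ := hgap
      obtain ⟨w, hwI, hwU⟩ := not_disjoint_iff.1 hdis
      exact Or.inr (Or.inl ⟨j, hj, ⟨w, hwU, hwI⟩,
        hI.left_mem_or_right_mem_of_mem_Ioo hwI heI hwU fun h => heU (mem_iUnion.2 ⟨j, h⟩)⟩)
    · push Not at hgap
      exact Or.inr (Or.inr ⟨hIL, hgap⟩)
  · obtain ⟨w, hwI, hwL⟩ := not_subset.1 hIL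
    exact Or.inl (hI.left_mem_or_right_mem_of_mem_Icc heI hwI heL hwL)

lemma subset_Icc_diff_union_inter_of_disjoint {I W : Set ℝ} {L : ℝ} {P Q : ℕ → ℝ} {n₀ : ℕ}
    (hIL : I ⊆ Icc 0 L) (hIW : I ⊆ W) (hdisj : ∀ j < n₀, Disjoint I (Ioo (P j) (Q j))) :
    I ⊆ (Icc 0 L \ ⋃ j, Ioo (P j) (Q j)) ∪ (W ∩ ⋃ k, Ioo (P (n₀ + k)) (Q (n₀ + k))) := by
  intro y hy
  by_cases hyU : y ∈ ⋃ j, Ioo (P j) (Q j)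
  · obtain ⟨j, hj⟩ := mem_iUnion.1 hyU
    have hjn : n₀ ≤ j := not_lt.1 fun h => Set.disjoint_left.1 (hdisj j h) hy hj
    refine Or.inr ⟨hIW hy, mem_iUnion.2 ⟨j - n₀, ?_⟩⟩
    rwa [Nat.add_sub_cancel' hjn]
  · exact Or.inl ⟨hIL hy, hyU⟩

lemma exists_coverNum_closedBall_inter_Icc_diff_le {L : ℝ} {P Q : ℕ → ℝ}
    (hdisj : Pairwise (Function.onFun Disjoint fun j => Ioo (P j) (Q j))) (n₀ : ℕ)
    {x r R : ℝ} (hr : 0 < r) (hrR : r < R) :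
    ∃ J ⊆ Finset.range n₀, (∀ j ∈ J, Ioo (P j) (Q j) ⊆ Icc (x - 3 * R) (x + 3 * R)) ∧
    ∃ S : Finset ℕ, (∀ i ∈ S, gridCell (x - R) (2 * r) i ⊆ (Icc 0 L \ ⋃ j, Ioo (P j) (Q j)) ∪
        (Icc (x - 3 * R) (x + 3 * R) ∩ ⋃ k, Ioo (P (n₀ + k)) (Q (n₀ + k)))) ∧
      coverNum r (closedBall x R ∩ (Icc 0 L \ ⋃ j, Ioo (P j) (Q j))) ≤ 2 * #J + #S + 6 := by
  classical
  set W := Icc (x - 3 * R) (x + 3 * R)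
  set n := ⌊R / r⌋₊ + 1
  set cell := gridCell (x - R) (2 * r)
  have hcellW : ∀ i < n, cell i ⊆ W := fun i hi => gridCell_subset_Icc_of_lt_floor hr hrR hi
  have hdisjCell := pairwise_disjoint_gridCell (u := x - R) (by positivity : 0 ≤ 2 * r)
  set JW := (Finset.range n₀).filter fun j => (Ioo (P j) (Q j) ∩ W).Nonempty
  set J := JW.filter fun j => Ioo (P j) (Q j) ⊆ W
  set edge := (Finset.range n).filter fun i => (0 : ℝ) ∈ cell i ∨ L ∈ cell i
  set big := (Finset.range n).filter fun i => ∃ j ∈ JW, P j ∈ cell i ∨ Q j ∈ cell i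
  set S := (Finset.range n).filter fun i =>
    cell i ⊆ Icc 0 L ∧ ∀ j < n₀, Disjoint (cell i) (Ioo (P j) (Q j))
  have hedge : #edge ≤ 2 :=
    (card_le_card_of_forall_exists_mem (T := {0, L}) hdisjCell fun i hi => by
      simpa using (Finset.mem_filter.1 hi).2).trans Finset.card_le_two
  have hbig : #big ≤ 2 * #JW :=
    card_le_two_mul_card_of_forall_exists hdisjCell fun i hi => (Finset.mem_filter.1 hi).2
  have hJW : #JW ≤ #J + 2 :=
    card_le_card_add_two_of_ordConnected hdisj (fun _ => ordConnected_Ioo)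
      (fun j hj => (Finset.mem_filter.1 hj).2) fun j hj h => Finset.mem_filter.2 ⟨hj, h⟩
  have hcov := coverNum_le_card_of_gridCell hr
    (F := closedBall x R ∩ (Icc 0 L \ ⋃ j, Ioo (P j) (Q j)))
    (inter_subset_left.trans (closedBall_subset_Ico_floor hr)) (edge ∪ big ∪ S)
    fun i hi ⟨y, hyc, _, hyE⟩ => by
      have hin := Finset.mem_range.2 hi
      rcases ordConnected_Ico.endpoint_mem_or_subset_of_inter_nonempty ⟨y, hyc, hyE⟩ n₀ with
        h | ⟨j, hj, ⟨w, hwU, hwc⟩, h⟩ | h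
      · exact Finset.mem_union_left _ (Finset.mem_union_left _ (Finset.mem_filter.2 ⟨hin, h⟩))
      · have hjW : j ∈ JW := Finset.mem_filter.2 ⟨Finset.mem_range.2 hj, w, hwU, hcellW i hi hwc⟩
        exact Finset.mem_union_left _
          (Finset.mem_union_right _ (Finset.mem_filter.2 ⟨hin, j, hjW, h⟩))
      · exact Finset.mem_union_right _ (Finset.mem_filter.2 ⟨hin, h⟩)
  refine ⟨J, (Finset.filter_subset _ _).trans (Finset.filter_subset _ _),
    fun j hj => (Finset.mem_filter.1 hj).2, S, fun i hi => ?_, ?_⟩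
  · obtain ⟨hin, hiL, hidisj⟩ := Finset.mem_filter.1 hi
    exact subset_Icc_diff_union_inter_of_disjoint hiL (hcellW i (Finset.mem_range.1 hin)) hidisj
  · have h1 := Finset.card_union_le (edge ∪ big) S
    have h2 := Finset.card_union_le edge big
    omega

lemma IsComplementarySet.exists_coverNum_closedBall_inter_le {a : ℕ → ℝ} {E : Set ℝ}
    (hE : IsComplementarySet a E) (n₀ : ℕ) {x r R : ℝ} (hr : 0 < r) (hrR : r < R) :
    ∃ J ⊆ Finset.range n₀, ∑ j ∈ J, a j ≤ 6 * R ∧ ∃ S : Finset ℕ,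
      #S * (2 * r) ≤ 6 * R ∧ #S * (2 * r) ≤ tailSum a n₀ ∧
      coverNum r (closedBall x R ∩ E) ≤ 2 * #J + #S + 6 := by
  have hsum := hE.summable
  have hnn : ∀ n, 0 ≤ a n := fun n => (hE.pos n).le
  have hE0 := hE.volume_eq_zero
  obtain ⟨U, hU, -, hdisj, rfl⟩ := hE
  choose P Q hPQ hlen hUeq using hU
  obtain rfl : U = fun j => Ioo (P j) (Q j) := funext hUeq
  obtain ⟨J, hJ, hJW, S, hS, hcov⟩ :=
    exists_coverNum_closedBall_inter_Icc_diff_le (L := ∑' i, a i) hdisj n₀ (x := x) hr hrR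
  have hSreal : ∀ t, 0 ≤ t → volume (Icc (x - 3 * R) (x + 3 * R) ∩
      ⋃ k, Ioo (P (n₀ + k)) (Q (n₀ + k))) ≤ ENNReal.ofReal t → #S * (2 * r) ≤ t := by
    intro t ht hV
    have := (card_mul_le_of_gridCell_subset (by positivity) hE0 hS).trans hV
    rwa [← ENNReal.ofReal_natCast, ← ENNReal.ofReal_mul (by positivity),
      ENNReal.ofReal_le_ofReal_iff ht] at this
  refine ⟨J, hJ, ?_, S, hSreal _ (by linarith) ?_, hSreal _ (tsum_nonneg fun k => hnn _) ?_, hcov⟩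
  · have := sum_sub_le_of_pairwise_disjoint_Ioo (fun j => (hPQ j).le) hdisj (by linarith) hJW
    simp only [hlen] at this
    linarith
  · exact (measure_mono inter_subset_left).trans
      (Real.volume_Icc.trans_le (ENNReal.ofReal_le_ofReal (by linarith)))
  · exact (measure_mono inter_subset_right).trans (volume_iUnion_Ioo_le_tailSum hsum hnn hlen n₀)

theorem coverNum_closedBall_inter_le {a : ℕ → ℝ} {E : Set ℝ} (hdec : Antitone a)
    (hE : IsComplementarySet a E) {c ρ α : ℝ} (hα : 0 ≤ α) (hD : AssouadBound (decSet a) c ρ α)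
    {x r R : ℝ} (hr : 0 < r) (hrR : r < R) (hRρ : 7 * R < ρ) :
    (coverNum r (closedBall x R ∩ E) : ℝ) ≤ (4 + 2 * c * (18 ^ α + 7 ^ α)) * (R / r) ^ α := by
  have hsum := hE.summable
  have hR : 0 < R := hr.trans hrR
  obtain ⟨n₀, hbig, hsmall⟩ := hdec.exists_threshold hsum.tendsto_atTop_zero hr
  obtain ⟨J, hJ, hJsum, S, hSW, hST, hcov⟩ :=
    hE.exists_coverNum_closedBall_inter_le n₀ (x := x) hr hrR
  have hJD : ((#J + 1 : ℕ) : ℝ) ≤ c * (18 * (R / r)) ^ α := calc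
    _ ≤ (coverNum (r / 3) (closedBall (tailSum a n₀) (6 * R) ∩ decSet a) : ℝ) := by
        exact_mod_cast card_add_one_le_coverNum_decSet hdec hsum hr hbig hJ hJsum
    _ ≤ c * (6 * R / (r / 3)) ^ α :=
        hD _ (tailSum_mem_decSet a n₀) _ _ (by positivity) (by linarith) (by linarith)
    _ = c * (18 * (R / r)) ^ α := by congr 2; field_simp; ring
  have hSD : (#S : ℝ) * (2 * r) ≤ 4 * r * (c * (7 * (R / r)) ^ α) := calc
    _ ≤ 4 * r * coverNum r (closedBall (tailSum a n₀) (7 * R) ∩ decSet a) :=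
        le_mul_coverNum_decSet hsum hr (fun k hk => (hsmall k hk).le) hST (by linarith)
    _ ≤ 4 * r * (c * (7 * R / r) ^ α) := by
        gcongr
        exact hD _ (tailSum_mem_decSet a n₀) _ _ hr (by linarith) hRρ
    _ = _ := by rw [mul_div_assoc]
  have hQ : 1 ≤ (R / r) ^ α := Real.one_le_rpow ((one_le_div hr).2 hrR.le) hα
  rw [Real.mul_rpow (by norm_num) (by positivity)] at hJD hSD
  push_cast at hJD
  have hS : (#S : ℝ) ≤ 2 * (c * (7 ^ α * (R / r) ^ α)) :=
    le_of_mul_le_mul_right (hSD.trans_eq (by ring)) (by positivity : (0 : ℝ) < 2 * r)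
  calc (coverNum r _ : ℝ) ≤ 2 * #J + #S + 6 := by exact_mod_cast hcov
    _ ≤ _ := by linarith

lemma assouadExponents_decSet_subset {a : ℕ → ℝ} {E : Set ℝ} (hdec : Antitone a)
    (hE : IsComplementarySet a E) : assouadExponents (decSet a) ⊆ assouadExponents E := by
  intro α hα
  have hα0 := nonneg_of_mem_assouadExponents ⟨0, Or.inl rfl⟩ hα
  obtain ⟨c, hc, ρ, hρ, hD⟩ := hα
  exact ⟨4 + 2 * c * (18 ^ α + 7 ^ α), by positivity, ρ / 7, by positivity,
    fun x _ r R hr hrR hRρ => coverNum_closedBall_inter_le hdec hE hα0 hD hr hrR (by linarith)⟩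

theorem dimA_le_dimA_decSet {a : ℕ → ℝ} {E : Set ℝ} (hdec : Antitone a)
    (hE : IsComplementarySet a E) : dimA E ≤ dimA (decSet a) :=
  dimA_le_dimA_of_assouadExponents_subset ⟨0, hE.zero_mem⟩ (assouadExponents_decSet_subset hdec hE)

theorem dimA_eq_zero_of_dimA_decSet_eq_zero_general
    (a : ℕ → ℝ) (hdec : Antitone a)
    (hD : dimA (decSet a) = 0)
    (E : Set ℝ) (hE : IsComplementarySet a E) :
    dimA E = 0 :=
  le_antisymm (hD ▸ dimA_le_dimA_decSet hdec hE) (dimA_nonneg ⟨0, hE.zero_mem⟩)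

/-- if `dim_A D_a = 0` then every complementary set of `a` has
Assouad dimension `0`. -/
theorem dimA_eq_zero_of_dimA_decSet_eq_zero
    (a : ℕ → ℝ) (hpos : ∀ n, 0 < a n) (hdec : Antitone a) (hsum : Summable a)
    (hD : dimA (decSet a) = 0)
    (E : Set ℝ) (hE : IsComplementarySet a E) :
    dimA E = 0 :=
  dimA_eq_zero_of_dimA_decSet_eq_zero_general a hdec hD E hE
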